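/- arXiv:2312.15227 — 4 statements merged into one kernel-verified Lean document; each statement's English description precedes it below -/
import Mathlib

section
/- The vector (3, 6, 19) satisfies gcd(3, 6, 19) = 1, the integer 35 cannot be written as 3x + 6y + 19z with nonnegative integers x, y, z, every integer b > 35 can be so written (so F(3, 6, 19) = 35), and 35 > (1/2)(√(3·6·19·(3 + 6 + 19)) − 3 − 6 − 19) = (1/2)(6√266 − 28). Hence the bound F(a) ≤ (1/2)(√(a_1a_2a_3(a_1 + a_2 + a_3)) − a_1 − a_2 − a_3) of Beck et al. fails when only gcd(a_1, …, a_n) = 1 is assumed. -/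
lemma sqrt_eq_aux : Real.sqrt (3 * 6 * 19 * (3 + 6 + 19)) = 6 * Real.sqrt 266 := by
  rw [show (3 * 6 * 19 * (3 + 6 + 19) : ℝ) = 6 ^ 2 * 266 by norm_num,
    Real.sqrt_mul (by positivity), Real.sqrt_sq (by norm_num)]

lemma sqrt266_lt : Real.sqrt 266 < 49 / 3 := by
  have h := Real.sq_sqrt (by norm_num : (266:ℝ) ≥ 0)
  nlinarith [Real.sqrt_nonneg (266:ℝ)]

/-- The vector `(3, 6, 19)` has gcd `1`, the integer `35` is not representable
as `3x + 6y + 19z` with `x, y, z` nonnegative integers, every integer `b > 35`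
is so representable (so `F(3,6,19) = 35`), and
`35 > (1/2)(√(3·6·19·(3+6+19)) - 3 - 6 - 19) = (1/2)(6√266 - 28)`.
Hence the bound of Beck et al. fails when only `gcd = 1` is assumed. -/
theorem beck_bound_counterexample_n3 :
    Nat.gcd 3 (Nat.gcd 6 19) = 1 ∧
    (¬ ∃ x y z : ℕ, (35 : ℤ) = 3 * (x : ℤ) + 6 * (y : ℤ) + 19 * (z : ℤ)) ∧
    (∀ b : ℤ, b > 35 → ∃ x y z : ℕ, b = 3 * (x : ℤ) + 6 * (y : ℤ) + 19 * (z : ℤ)) ∧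
    (1 / 2 : ℝ) * (Real.sqrt (3 * 6 * 19 * (3 + 6 + 19)) - 3 - 6 - 19)
      = (1 / 2 : ℝ) * (6 * Real.sqrt 266 - 28) ∧
    (35 : ℝ) > (1 / 2 : ℝ) * (Real.sqrt (3 * 6 * 19 * (3 + 6 + 19)) - 3 - 6 - 19) := by
  refine ⟨by norm_num, ?_, ?_, ?_, ?_⟩
  · rintro ⟨x, y, z, h⟩
    omega
  · intro b hb
    exact ⟨((b - 19 * (b % 3)) / 3).toNat, 0, (b % 3).toNat, by omega⟩
  · rw [sqrt_eq_aux]; ring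
  · rw [sqrt_eq_aux]
    nlinarith [sqrt266_lt]
end

section
/- Let n ≥ 4 and let a = (a_1, …, a_n) be positive integers with a_1 = 2, a_2 = 4, a_3 = 6, gcd(a_1, …, a_n) = 1 and 7 < a_4 ≤ a_5 ≤ ⋯ ≤ a_n. Then the integer 7 cannot be written as a_1x_1 + ⋯ + a_nx_n with nonnegative integers x_1, …, x_n, so F(a) ≥ 7, while (1/2)(√(2·4·6·(2 + 4 + 6)) − 2 − 4 − 6) = 6 < 7. Hence for every n ≥ 4 the bound of Beck et al. fails when only gcd(a_1, …, a_n) = 1 is assumed. -/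
/-- Let `n ≥ 4` and let `a = (2, 4, 6, a 4, …, a n)` be positive integers with
gcd `1` and `7 < a 4 ≤ a 5 ≤ ⋯ ≤ a n`. Then `7` is not representable as a
nonnegative integral combination of the `a i`, so `F(a) ≥ 7`, while
`(1/2)(√(2·4·6·(2+4+6)) - 2 - 4 - 6) = 6 < 7`.  Hence for every `n ≥ 4` the
bound of Beck et al. fails when only `gcd = 1` is assumed. -/
theorem beck_bound_counterexample_n_ge_4 (n : ℕ) (hn : 4 ≤ n) (a : Fin n → ℕ)
    (hpos : ∀ i, 0 < a i)
    (h1 : a ⟨0, by omega⟩ = 2) (h2 : a ⟨1, by omega⟩ = 4)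
    (h3 : a ⟨2, by omega⟩ = 6)
    (hgcd : Finset.univ.gcd a = 1)
    (h4 : 7 < a ⟨3, by omega⟩)
    (hmono : ∀ i j : Fin n, 3 ≤ (i : ℕ) → i ≤ j → a i ≤ a j) :
    (¬ ∃ x : Fin n → ℕ, (7 : ℤ) = ∑ i, (a i : ℤ) * (x i : ℤ)) ∧
    (∀ Fr : ℤ,
      IsGreatest {b : ℤ | ¬ ∃ x : Fin n → ℕ, b = ∑ i, (a i : ℤ) * (x i : ℤ)} Fr →
      7 ≤ Fr) ∧
    (1 / 2 : ℝ) * (Real.sqrt (2 * 4 * 6 * (2 + 4 + 6)) - 2 - 4 - 6) = 6 ∧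
    (6 : ℝ) < 7 := by

  have ha : ∀ i : Fin n, 2 ∣ a i ∨ 7 < a i := by
    intro i
    rcases lt_or_ge (i : ℕ) 3 with h | h
    · left
      have h012 : (i : ℕ) = 0 ∨ (i : ℕ) = 1 ∨ (i : ℕ) = 2 := by omega
      rcases h012 with h0 | h0 | h0
      · have : i = ⟨0, by omega⟩ := Fin.ext h0
        rw [this, h1]
      · have : i = ⟨1, by omega⟩ := Fin.ext h0
        rw [this, h2]
        norm_num
      · have : i = ⟨2, by omega⟩ := Fin.ext h0
        rw [this, h3]
        norm_num
    · right
      have := hmono ⟨3, by omega⟩ i (by simp) (by simpa [Fin.le_def] using h)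
      omega
  have key : ¬ ∃ x : Fin n → ℕ, (7 : ℤ) = ∑ i, (a i : ℤ) * (x i : ℤ) := by
    rintro ⟨x, hx⟩
    have hx' : (7 : ℕ) = ∑ i, a i * x i := by exact_mod_cast hx
    have hle : ∀ i : Fin n, a i * x i ≤ 7 := by
      intro i
      rw [hx']
      exact Finset.single_le_sum (f := fun i => a i * x i) (fun _ _ => Nat.zero_le _) (Finset.mem_univ i)
    have hdvd : 2 ∣ ∑ i, a i * x i := by
      refine Finset.dvd_sum fun i _ => ?_
      rcases ha i with h | h
      · exact h.mul_right _
      · rcases Nat.eq_zero_or_pos (x i) with h0 | h0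
        · simp [h0]
        · have : a i ≤ a i * x i := Nat.le_mul_of_pos_right _ h0
          have := hle i
          omega
    rw [← hx'] at hdvd
    omega
  refine ⟨key, fun Fr hFr => hFr.2 key, ?_, by norm_num⟩
  have h576 : Real.sqrt (2 * 4 * 6 * (2 + 4 + 6)) = 24 := by
    rw [show (2 * 4 * 6 * (2 + 4 + 6) : ℝ) = 24 ^ 2 by norm_num,
      Real.sqrt_sq (by norm_num)]
  rw [h576]
  norm_num
end

section
/- Let n ≥ 3 and let a_1 ≤ a_2 ≤ ⋯ ≤ a_n be positive integers that are pairwise coprime (gcd(a_i, a_j) = 1 for all i ≠ j). Then every integer b > UB_1(a_1, a_2, a_3) can be written as a_1x_1 + ⋯ + a_nx_n with nonnegative integers x_1, …, x_n; that is, F(a_1, …, a_n) ≤ (1/2)(√((1/3)(a_1 + a_2 + a_3)(a_1 + a_2 + a_3 + 2a_1a_2a_3) + (8/3)(a_1a_2 + a_2a_3 + a_3a_1)) − a_1 − a_2 − a_3). -/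
/-!
If `m ≥ 0` is not representable by `a, b, c`, then no `k = m - c z` with `0 ≤ z ≤ m / c` is
representable by `a, b`, and for such `k` one has `k + a b = b y + a w`, where `y < a` and `w < b`
solve `b y ≡ k (mod a)` and `a w ≡ k (mod b)`. As `z` runs over consecutive integers, `y` and `w`
run periodically through complete residue systems, so their sums are at most about half the
number of terms times `a` resp. `b`. Summing the identity over `z` gives
`4 m (m + a + b + c) ≤ a b c (a + b)`, and solving this quadratic in `m` gives `m ≤ UB₁ a b c`.
-/

/-- The corrected upper bound `UB₁` obtained from the argument of Beck et al. -/
noncomputable def UB₁ (a₁ a₂ a₃ : ℝ) : ℝ :=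
  (1 / 2) * (Real.sqrt ((1 / 3) * (a₁ + a₂ + a₃) * (a₁ + a₂ + a₃ + 2 * a₁ * a₂ * a₃)
      + (8 / 3) * (a₁ * a₂ + a₂ * a₃ + a₃ * a₁)) - a₁ - a₂ - a₃)

open Finset Function

/-- The least nonnegative solution `y` of `b * y ≡ k [ZMOD a]` when `b` is coprime to `a`. -/
noncomputable def congrSol (a b : ℕ) (k : ℤ) : ℕ := ((k : ZMod a) * (b : ZMod a)⁻¹).val

section congrSol

variable {a b : ℕ}

theorem congrSol_lt (ha : 0 < a) (k : ℤ) : congrSol a b k < a :=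
  have : NeZero a := ⟨ha.ne'⟩
  ZMod.val_lt _

theorem mul_congrSol_modEq (ha : 0 < a) (hba : b.Coprime a) (k : ℤ) :
    b * (congrSol a b k : ℤ) ≡ k [ZMOD a] := by
  have : NeZero a := ⟨ha.ne'⟩
  rw [← ZMod.intCast_eq_intCast_iff]
  push_cast
  rw [congrSol, ZMod.natCast_zmod_val, mul_left_comm, ZMod.coe_mul_inv_eq_one b hba, mul_one]

theorem congrSol_eq_of_modEq {k k' : ℤ} (h : k ≡ k' [ZMOD a]) :
    congrSol a b k = congrSol a b k' := by
  rw [congrSol, congrSol, (ZMod.intCast_eq_intCast_iff k k' a).2 h]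

theorem modEq_of_congrSol_eq (ha : 0 < a) (hba : b.Coprime a) {k k' : ℤ}
    (h : congrSol a b k = congrSol a b k') : k ≡ k' [ZMOD a] :=
  (mul_congrSol_modEq ha hba k).symm.trans (h ▸ mul_congrSol_modEq ha hba k')

end congrSol

theorem two_mul_sum_range_intCast (n : ℕ) : 2 * ∑ i ∈ range n, (i : ℤ) = n * (n - 1) := by
  induction n with
  | zero => simp
  | succ n ih => rw [sum_range_succ]; push_cast; linarith

theorem two_mul_sum_range_le_of_injOn {p t : ℕ} {f : ℕ → ℕ} (hlt : ∀ z < t, f z < p)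
    (hinj : Set.InjOn f (Set.Iio t)) :
    2 * ∑ z ∈ range t, (f z : ℤ) ≤ t * (2 * p - t - 1) := by
  have hinj' : Set.InjOn (fun z => (f z : ℤ)) (range t) := fun x hx y hy h =>
    hinj (by simpa using hx) (by simpa using hy) (by simpa using h)
  have hbound : ∀ v ∈ (range t).image (fun z => (f z : ℤ)), v ≤ p - 1 := by
    simp only [mem_image, mem_range]
    rintro v ⟨z, hz, rfl⟩
    have := hlt z hz
    omega
  have h := sum_le_sum_range hbound
  rw [sum_image hinj', card_image_of_injOn hinj', card_range] at h
  have hgauss := two_mul_sum_range_intCast t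
  rw [sum_sub_distrib, sum_const, card_range, nsmul_eq_mul] at h
  linarith

theorem sum_range_mul_add_of_periodic {p : ℕ} {f : ℕ → ℤ} (hper : Periodic f p) (q t : ℕ) :
    ∑ z ∈ range (q * p + t), f z = q * ∑ z ∈ range p, f z + ∑ z ∈ range t, f z := by
  induction q with
  | zero => simp
  | succ q ih =>
    rw [show (q + 1) * p + t = p + (q * p + t) by ring, sum_range_add]
    have hshift : ∀ x, f (p + x) = f x := fun x => by rw [add_comm, hper]
    simp only [hshift, ih]
    push_cast
    ring

theorem sum_range_le_of_periodic {p : ℕ} {f : ℕ → ℕ} (hper : Periodic f p) (hlt : ∀ z, f z < p)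
    (hinj : Set.InjOn f (Set.Iio p)) (N : ℕ) :
    8 * ∑ z ∈ range N, (f z : ℤ) + 4 * N ≤ 4 * N * p + p ^ 2 := by
  set q := N / p
  set t := N % p
  have hN : N = q * p + t := by rw [mul_comm]; exact (Nat.div_add_mod N p).symm
  have hper' : Periodic (fun z => (f z : ℤ)) p := fun z => by simp only [hper z]
  have hfull := two_mul_sum_range_le_of_injOn (fun z _ => hlt z) hinj
  have hpart := two_mul_sum_range_le_of_injOn (t := t) (fun z _ => hlt z)
    (hinj.mono fun z hz => lt_trans hz (Nat.mod_lt N (by have := hlt 0; omega)))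
  rw [hN, sum_range_mul_add_of_periodic hper']
  push_cast
  nlinarith [mul_le_mul_of_nonneg_left hfull (by positivity : (0 : ℤ) ≤ q),
    sq_nonneg ((p : ℤ) - 2 * t)]

theorem periodic_congrSol_sub_mul (a b c : ℕ) (m : ℤ) :
    Periodic (fun z : ℕ => congrSol a b (m - c * z)) a := fun z =>
  congrSol_eq_of_modEq (Int.modEq_iff_dvd.2 ⟨c, by push_cast; ring⟩)

theorem injOn_congrSol_sub_mul {a b c : ℕ} (ha : 0 < a) (hba : b.Coprime a) (hca : c.Coprime a)
    (m : ℤ) : Set.InjOn (fun z : ℕ => congrSol a b (m - c * z)) (Set.Iio a) := by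
  intro z₁ hz₁ z₂ hz₂ h
  have hsub := (modEq_of_congrSol_eq ha hba h).sub_left m
  simp only [sub_sub_cancel] at hsub
  have hmul : c * z₁ ≡ c * z₂ [MOD a] := by exact_mod_cast Int.natCast_modEq_iff.1 hsub
  exact (hmul.cancel_left_of_coprime (Nat.coprime_comm.1 hca)).eq_of_lt_of_lt hz₁ hz₂

theorem add_mul_eq_of_not_representable {a b : ℕ} (ha : 0 < a) (hb : 0 < b) (hab : a.Coprime b)
    {k : ℤ} (hk : 0 ≤ k) (hnr : ∀ x y : ℕ, k ≠ a * x + b * y) :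
    k + a * b = b * congrSol a b k + a * congrSol b a k := by
  set y := congrSol a b k
  set w := congrSol b a k
  have hy : (y : ℤ) < a := by exact_mod_cast congrSol_lt ha k
  have hw : (w : ℤ) < b := by exact_mod_cast congrSol_lt hb k
  have hmod_a : b * y + a * w ≡ k [ZMOD a] :=
    (Int.modEq_iff_dvd.2 ⟨-w, by ring⟩).trans (mul_congrSol_modEq ha hab.symm k)
  have hmod_b : b * y + a * w ≡ k [ZMOD b] :=
    (Int.modEq_iff_dvd.2 ⟨-y, by ring⟩).trans (mul_congrSol_modEq hb hab k)
  have hmod_ab : b * y + a * w ≡ k [ZMOD a * b] :=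
    (Int.modEq_and_modEq_iff_modEq_mul (by simpa using hab)).1 ⟨hmod_a, hmod_b⟩
  obtain ⟨j, hj⟩ := hmod_ab.symm.dvd
  have hab0 : (0 : ℤ) < a * b := by positivity
  have hj_le : j ≤ 1 := by
    by_contra! hj2
    nlinarith [mul_le_mul_of_nonneg_left hj2 hab0.le]
  have hj_ge : 1 ≤ j := by
    by_contra! hj0
    obtain ⟨i, hi⟩ : ∃ i : ℕ, -j = i := ⟨(-j).toNat, by omega⟩
    exact hnr w (y + a * i) (by push_cast; linear_combination -hj + a * b * hi)
  obtain rfl : j = 1 := le_antisymm hj_le hj_ge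
  linarith

section ThreeGenerators

variable {a b c m : ℕ} (ha : 0 < a) (hb : 0 < b) (hab : a.Coprime b) (hac : a.Coprime c)
  (hbc : b.Coprime c) (hnr : ∀ x y z : ℕ, m ≠ a * x + b * y + c * z)
include ha hb hab hac hbc hnr

theorem four_mul_div_add_one_le_of_not_representable :
    4 * (m / c + 1) * (m + m % c + a + b) ≤ a * b * (a + b) := by
  have hdiv := Nat.div_add_mod m c
  generalize m / c = q at *
  generalize m % c = r at *
  zify at hdiv ⊢
  have hsplit : ∀ z ∈ range (q + 1), (m - c * z + a * b : ℤ) =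
      b * congrSol a b (m - c * z) + a * congrSol b a (m - c * z) := by
    intro z hz
    have hcz : c * z ≤ m := by
      have := Nat.mul_le_mul_left c (Nat.lt_succ_iff.1 (mem_range.1 hz)); omega
    refine add_mul_eq_of_not_representable ha hb hab (by omega) fun x y hxy => ?_
    have hm : (m : ℤ) = a * x + b * y + c * z := by linear_combination hxy
    exact hnr x y z (by exact_mod_cast hm)
  have hsum := sum_congr rfl hsplit
  simp only [sum_add_distrib, sum_sub_distrib, ← mul_sum, sum_const, card_range,
    nsmul_eq_mul] at hsum
  have hF := sum_range_le_of_periodic (periodic_congrSol_sub_mul a b c m)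
    (fun z => congrSol_lt ha _) (injOn_congrSol_sub_mul ha hab.symm hac.symm m) (q + 1)
  have hG := sum_range_le_of_periodic (periodic_congrSol_sub_mul b a c m)
    (fun z => congrSol_lt hb _) (injOn_congrSol_sub_mul hb hab hbc.symm m) (q + 1)
  have hgauss := two_mul_sum_range_intCast (q + 1)
  push_cast at *
  nlinarith [mul_le_mul_of_nonneg_left hF (by positivity : (0 : ℤ) ≤ b),
    mul_le_mul_of_nonneg_left hG (by positivity : (0 : ℤ) ≤ a)]

theorem four_mul_le_of_not_representable (hc : 0 < c) :
    4 * m * (m + a + b + c) ≤ a * b * c * (a + b) := by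
  have h := Nat.mul_le_mul_left c
    (four_mul_div_add_one_le_of_not_representable ha hb hab hac hbc hnr)
  have hdiv := Nat.div_add_mod m c
  have hr := Nat.mod_lt m hc
  generalize m / c = q at *
  generalize m % c = r at *
  subst hdiv
  nlinarith [Nat.mul_le_mul_left (c * q) hr.le]

end ThreeGenerators

theorem le_UB₁ {a b c m : ℝ} (ha : 1 ≤ a) (hb : 1 ≤ b) (hac : a ≤ c) (hbc : b ≤ c)
    (h : 4 * m * (m + a + b + c) ≤ a * b * c * (a + b)) : m ≤ UB₁ a b c := by
  have hradicand : a * b * c * (a + b) + (a + b + c) ^ 2 ≤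
      (1 / 3) * (a + b + c) * (a + b + c + 2 * a * b * c) + (8 / 3) * (a * b + b * c + c * a) := by
    have hab : 1 ≤ a * b := one_le_mul_of_one_le_of_one_le ha hb
    have hc2 : 0 ≤ 2 * c - a - b := by linarith
    rcases le_total c (a + b) with hd | hd
    · nlinarith [mul_nonneg (mul_nonneg (by positivity : 0 ≤ a * b) (by linarith : 0 ≤ c)) hc2,
        mul_nonneg (sub_nonneg.2 hac) (sub_nonneg.2 hbc)]
    · nlinarith [mul_nonneg (mul_nonneg (sub_nonneg.2 hab) (by linarith : 0 ≤ c)) hc2,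
        mul_nonneg (sub_nonneg.2 hd) (by linarith : 0 ≤ a + b)]
  have hsq : (2 * m + a + b + c) ^ 2 ≤ a * b * c * (a + b) + (a + b + c) ^ 2 := by
    linear_combination h
  have := Real.le_sqrt_of_sq_le (hsq.trans hradicand)
  unfold UB₁
  linarith

theorem exists_eq_sum_of_eq_add_add {ι : Type*} [Fintype ι] [DecidableEq ι] (a : ι → ℕ)
    (i j k : ι) {m x y z : ℕ} (h : m = a i * x + a j * y + a k * z) :
    ∃ w : ι → ℕ, (m : ℤ) = ∑ l, (a l : ℤ) * w l :=
  ⟨Pi.single i x + Pi.single j y + Pi.single k z, by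
    simp [h, mul_add, sum_add_distrib, Pi.single_apply]⟩

/-- Let `n ≥ 3` and let `a 1 ≤ a 2 ≤ ⋯ ≤ a n` be pairwise coprime positive
integers. Then every integer `b > UB₁ (a 1) (a 2) (a 3)` is a nonnegative
integral combination of the `a i`; that is, `F(a) ≤ UB₁ (a 1) (a 2) (a 3)`. -/
theorem frobenius_le_UB₁ (n : ℕ) (hn : 3 ≤ n) (a : Fin n → ℕ)
    (hpos : ∀ i, 0 < a i) (hmono : Monotone a)
    (hcop : ∀ i j, i ≠ j → Nat.gcd (a i) (a j) = 1) :
    ∀ b : ℤ, (b : ℝ) > UB₁ (a ⟨0, by omega⟩ : ℕ) (a ⟨1, by omega⟩ : ℕ) (a ⟨2, by omega⟩ : ℕ) →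
      ∃ x : Fin n → ℕ, b = ∑ i, (a i : ℤ) * (x i : ℤ) := by
  intro m hm
  have h01 : a ⟨0, by omega⟩ ≤ a ⟨1, by omega⟩ := hmono (Fin.mk_le_mk.2 zero_le_one)
  have h12 : a ⟨1, by omega⟩ ≤ a ⟨2, by omega⟩ := hmono (Fin.mk_le_mk.2 one_le_two)
  have hA : (1 : ℝ) ≤ a ⟨0, by omega⟩ := by exact_mod_cast hpos _
  have hB : (1 : ℝ) ≤ a ⟨1, by omega⟩ := by exact_mod_cast hpos _
  have hAC : (a ⟨0, by omega⟩ : ℝ) ≤ a ⟨2, by omega⟩ := by exact_mod_cast h01.trans h12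
  have hBC : (a ⟨1, by omega⟩ : ℝ) ≤ a ⟨2, by omega⟩ := by exact_mod_cast h12
  have hUB : (0 : ℝ) ≤ UB₁ _ _ _ :=
    le_UB₁ hA hB hAC hBC (m := 0) (by simp only [mul_zero, zero_mul]; positivity)
  lift m to ℕ using by exact_mod_cast (hUB.trans_lt hm).le
  obtain ⟨x, y, z, hxyz⟩ : ∃ x y z : ℕ,
      m = a ⟨0, by omega⟩ * x + a ⟨1, by omega⟩ * y + a ⟨2, by omega⟩ * z := by
    by_contra! hnr
    have key := four_mul_le_of_not_representable (hpos _) (hpos _) (hcop _ _ (by simp))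
      (hcop _ _ (by simp)) (hcop _ _ (by simp)) hnr (hpos _)
    exact (le_UB₁ hA hB hAC hBC (by exact_mod_cast key)).not_gt hm
  exact exists_eq_sum_of_eq_add_add a _ _ _ hxyz
end

section
/- Let a_1, a_2, a_3 be positive integers with a_1 < a_2 < a_3 and a_1a_2 ≥ 33. Then a_1a_2a_3(a_1 + a_2 + a_3) > a_1² + a_2² + a_3² + 10(a_1a_2 + a_2a_3 + a_1a_3). Consequently UB_1(a_1, a_2, a_3) < UB_2(a_1, a_2, a_3). -/
/-- The original upper bound `UB₂` of Beck et al. -/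
noncomputable def UB₂ (a₁ a₂ a₃ : ℝ) : ℝ :=
  (1 / 2) * (Real.sqrt (a₁ * a₂ * a₃ * (a₁ + a₂ + a₃)) - a₁ - a₂ - a₃)

/-- If `a₁ < a₂ < a₃` are positive integers with `a₁a₂ ≥ 33`, then
`a₁a₂a₃(a₁+a₂+a₃) > a₁² + a₂² + a₃² + 10(a₁a₂ + a₂a₃ + a₁a₃)`, and
consequently `UB₁ < UB₂`. -/
theorem UB₁_lt_UB₂_of_large_product (a₁ a₂ a₃ : ℕ)
    (h₁ : 0 < a₁) (h₁₂ : a₁ < a₂) (h₂₃ : a₂ < a₃) (hprod : 33 ≤ a₁ * a₂) :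
    a₁ * a₂ * a₃ * (a₁ + a₂ + a₃) >
      a₁ ^ 2 + a₂ ^ 2 + a₃ ^ 2 + 10 * (a₁ * a₂ + a₂ * a₃ + a₁ * a₃) ∧
    UB₁ (a₁ : ℝ) (a₂ : ℝ) (a₃ : ℝ) < UB₂ (a₁ : ℝ) (a₂ : ℝ) (a₃ : ℝ) := by
  have hx₁ : (1:ℝ) ≤ (a₁:ℝ) := by exact_mod_cast h₁
  have h12 : (a₁:ℝ) < (a₂:ℝ) := by exact_mod_cast h₁₂
  have h23 : (a₂:ℝ) < (a₃:ℝ) := by exact_mod_cast h₂₃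
  have hp : (33:ℝ) ≤ (a₁:ℝ) * (a₂:ℝ) := by exact_mod_cast hprod
  have hreal : (a₁:ℝ) * a₂ * a₃ * (a₁ + a₂ + a₃) >
      (a₁:ℝ) ^ 2 + a₂ ^ 2 + a₃ ^ 2 + 10 * (a₁ * a₂ + a₂ * a₃ + a₁ * a₃) := by
    nlinarith [mul_le_mul_of_nonneg_right hp (by positivity :
        (0:ℝ) ≤ (a₃:ℝ) * (a₁ + a₂ + a₃)),
      mul_pos (by linarith : (0:ℝ) < (a₂:ℝ)) (by linarith : (0:ℝ) < (a₃:ℝ)),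
      sq_nonneg ((a₃:ℝ) - a₂), sq_nonneg ((a₃:ℝ) - a₁), sq_nonneg ((a₂:ℝ) - a₁)]
  refine ⟨by exact_mod_cast hreal, ?_⟩
  have harglt : (1 / 3) * ((a₁:ℝ) + a₂ + a₃) * (a₁ + a₂ + a₃ + 2 * a₁ * a₂ * a₃)
      + (8 / 3) * ((a₁:ℝ) * a₂ + a₂ * a₃ + a₃ * a₁)
      < (a₁:ℝ) * a₂ * a₃ * (a₁ + a₂ + a₃) := by nlinarith [hreal]
  have hnn : (0:ℝ) ≤ (1 / 3) * ((a₁:ℝ) + a₂ + a₃) * (a₁ + a₂ + a₃ + 2 * a₁ * a₂ * a₃)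
      + (8 / 3) * ((a₁:ℝ) * a₂ + a₂ * a₃ + a₃ * a₁) := by
    have h1 : (0:ℝ) < (a₁:ℝ) := by linarith
    have h2 : (0:ℝ) < (a₂:ℝ) := by linarith
    have h3 : (0:ℝ) < (a₃:ℝ) := by linarith
    positivity
  have hsqrt := Real.sqrt_lt_sqrt hnn harglt
  unfold UB₁ UB₂
  linarith [hsqrt]
end
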